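/- The operators Tᵢ := Eᵢ + q⁻¹·id on V^⊗n satisfy the braid relations of the Hecke algebra: for every 1 ≤ i ≤ n−2, Tᵢ T₍ᵢ₊₁₎ Tᵢ = T₍ᵢ₊₁₎ Tᵢ T₍ᵢ₊₁₎, and for all i, j with |i − j| ≥ 2, Tᵢ Tⱼ = Tⱼ Tᵢ. (Together with the quadratic relation this shows the Hecke algebra Hₙ acts on V^⊗n through H_{s_i} ↦ e_i + q⁻¹.) -/
import Mathlib


noncomputable section

/-- `V^{⊗n}` (with `V = ℂ²`) realized as ℂ-valued functions on sign words
`Fin n → Fin 2`; the sign `0` stands for `v₊` and `1` for `v₋`, and the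
standard basis vector `v_f` is the indicator function of `f`. -/
abbrev SpinSpace (n : ℕ) : Type := (Fin n → Fin 2) → ℂ

/-- A generic Temperley–Lieb-type generator acting on tensor slots `a` and `b`
(identity on all other slots): on the two distinguished slots it acts by
`v₊⊗v₊ ↦ 0`, `v₋⊗v₋ ↦ 0`, `v₊⊗v₋ ↦ α·(v₊⊗v₋) + v₋⊗v₊`,
`v₋⊗v₊ ↦ v₊⊗v₋ + β·(v₋⊗v₊)`. -/
def tlGen {n : ℕ} (α β : ℂ) (a b : Fin n) : Module.End ℂ (SpinSpace n) where
  toFun x g :=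
    (if g a = 0 ∧ g b = 1 then α else if g a = 1 ∧ g b = 0 then β else 0) * x g +
      (if g a ≠ g b then (1 : ℂ) else 0) * x (fun j => g (Equiv.swap a b j))
  map_add' x y := by
    funext g
    simp only [Pi.add_apply]
    ring
  map_smul' c x := by
    funext g
    simp only [Pi.smul_apply, smul_eq_mul, RingHom.id_apply]
    ring

lemma tlGen_apply {n : ℕ} (α β : ℂ) (a b : Fin n) (x : SpinSpace n) (g : Fin n → Fin 2) :
    tlGen α β a b x g =
    (if g a = 0 ∧ g b = 1 then α else if g a = 1 ∧ g b = 0 then β else 0) * x g +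
      (if g a ≠ g b then (1 : ℂ) else 0) * x (fun j => g (Equiv.swap a b j)) := rfl

lemma fin2cases (v : Fin 2) : v = 0 ∨ v = 1 := by omega

lemma tlGen_sq {n : ℕ} (α : ℂ) (hα : α ≠ 0) (a b : Fin n) (hab : a ≠ b) :
    tlGen α α⁻¹ a b * tlGen α α⁻¹ a b = (α + α⁻¹) • tlGen α α⁻¹ a b := by
  refine LinearMap.ext fun x => ?_
  funext g
  simp only [Module.End.mul_apply, LinearMap.smul_apply, Pi.smul_apply, smul_eq_mul, tlGen_apply,
    Equiv.swap_apply_left, Equiv.swap_apply_right, Equiv.swap_apply_self]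
  rcases fin2cases (g a) with h1 | h1 <;> rcases fin2cases (g b) with h2 | h2 <;>
    simp [h1, h2] <;> field_simp <;> ring

lemma tlGen_braidE {n : ℕ} (α : ℂ) (hα : α ≠ 0) (a b c : Fin n)
    (hab : a ≠ b) (hbc : b ≠ c) (hac : a ≠ c) :
    tlGen α α⁻¹ a b * (tlGen α α⁻¹ b c * tlGen α α⁻¹ a b) = tlGen α α⁻¹ a b := by
  refine LinearMap.ext fun x => ?_
  funext g
  simp only [Module.End.mul_apply, tlGen_apply,
    Equiv.swap_apply_left, Equiv.swap_apply_right, Equiv.swap_apply_self,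
    Equiv.swap_apply_of_ne_of_ne hab hac, Equiv.swap_apply_of_ne_of_ne hac.symm hbc.symm]
  rcases fin2cases (g a) with h1 | h1 <;> rcases fin2cases (g b) with h2 | h2 <;>
    rcases fin2cases (g c) with h3 | h3 <;>
    simp [h1, h2, h3] <;> field_simp <;> ring

lemma tlGen_braidE' {n : ℕ} (α : ℂ) (hα : α ≠ 0) (a b c : Fin n)
    (hab : a ≠ b) (hbc : b ≠ c) (hac : a ≠ c) :
    tlGen α α⁻¹ b c * (tlGen α α⁻¹ a b * tlGen α α⁻¹ b c) = tlGen α α⁻¹ b c := by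
  refine LinearMap.ext fun x => ?_
  funext g
  simp only [Module.End.mul_apply, tlGen_apply,
    Equiv.swap_apply_left, Equiv.swap_apply_right, Equiv.swap_apply_self,
    Equiv.swap_apply_of_ne_of_ne hab hac, Equiv.swap_apply_of_ne_of_ne hac.symm hbc.symm]
  rcases fin2cases (g a) with h1 | h1 <;> rcases fin2cases (g b) with h2 | h2 <;>
    rcases fin2cases (g c) with h3 | h3 <;>
    simp [h1, h2, h3] <;> field_simp <;> ring

lemma braidT {n : ℕ} (q : ℂ) (hq : q ≠ 0) (a b c : Fin n)
    (hab : a ≠ b) (hbc : b ≠ c) (hac : a ≠ c) :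
    (tlGen (-q) (-q⁻¹) a b + q⁻¹ • 1) * (tlGen (-q) (-q⁻¹) b c + q⁻¹ • 1) *
        (tlGen (-q) (-q⁻¹) a b + q⁻¹ • 1)
      = (tlGen (-q) (-q⁻¹) b c + q⁻¹ • 1) * (tlGen (-q) (-q⁻¹) a b + q⁻¹ • 1) *
        (tlGen (-q) (-q⁻¹) b c + q⁻¹ • 1) := by
  have hα : (-q : ℂ) ≠ 0 := neg_ne_zero.mpr hq
  have hinv : (-q⁻¹ : ℂ) = (-q)⁻¹ := by rw [inv_neg]
  rw [hinv]
  have h1 := tlGen_sq (-q) hα a b hab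
  have h2 := tlGen_sq (-q) hα b c hbc
  have h3 := tlGen_braidE (-q) hα a b c hab hbc hac
  have h4 := tlGen_braidE' (-q) hα a b c hab hbc hac
  simp only [add_mul, mul_add, smul_mul_assoc, mul_smul_comm, one_mul, mul_one, mul_assoc,
    h1, h2, h3, h4, smul_smul]
  match_scalars <;> field_simp <;> ring
lemma tlGen_comm {n : ℕ} (α β α' β' : ℂ) (a b c d : Fin n)
    (hac : a ≠ c) (had : a ≠ d) (hbc : b ≠ c) (hbd : b ≠ d) :
    tlGen α β a b * tlGen α' β' c d = tlGen α' β' c d * tlGen α β a b := by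
  refine LinearMap.ext fun x => ?_
  funext g
  have hswap : ∀ j, Equiv.swap a b (Equiv.swap c d j) = Equiv.swap c d (Equiv.swap a b j) := by
    intro j
    simp only [Equiv.swap_apply_def]
    split_ifs <;> simp_all
  simp only [Module.End.mul_apply, tlGen_apply,
    Equiv.swap_apply_of_ne_of_ne hac had, Equiv.swap_apply_of_ne_of_ne hbc hbd,
    Equiv.swap_apply_of_ne_of_ne hac.symm hbc.symm, Equiv.swap_apply_of_ne_of_ne had.symm hbd.symm]
  simp only [hswap]
  ring

/-- The spin representation generator `Eᵢ` (`1 ≤ i ≤ n−1`), acting as the identity on all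
tensor factors except the `i`-th and `(i+1)`-th (1-based), where it acts by
`v₊⊗v₊ ↦ 0`, `v₋⊗v₋ ↦ 0`, `v₊⊗v₋ ↦ −q·(v₊⊗v₋) + v₋⊗v₊`,
`v₋⊗v₊ ↦ v₊⊗v₋ − q⁻¹·(v₋⊗v₊)`. -/
def E (q : ℂ) {n : ℕ} (i : ℕ) (h1 : 1 ≤ i) (h2 : i < n) : Module.End ℂ (SpinSpace n) :=
  tlGen (-q) (-q⁻¹) ⟨i - 1, by omega⟩ ⟨i, h2⟩

/-- The Hecke-algebra operator `Tᵢ := Eᵢ + q⁻¹·id` on `V^{⊗n}`. -/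
def T (q : ℂ) {n : ℕ} (i : ℕ) (h1 : 1 ≤ i) (h2 : i < n) : Module.End ℂ (SpinSpace n) :=
  E q i h1 h2 + q⁻¹ • 1

/-- The operators `Tᵢ = Eᵢ + q⁻¹·id` satisfy the braid relations of the Hecke algebra:
`Tᵢ T_{i+1} Tᵢ = T_{i+1} Tᵢ T_{i+1}` for `1 ≤ i ≤ n−2`, and `Tᵢ Tⱼ = Tⱼ Tᵢ` for `|i−j| ≥ 2`. -/
theorem hecke_braid_relations (q : ℂ) (hq : q ≠ 0) (n : ℕ) :
    (∀ (i : ℕ) (h1 : 1 ≤ i) (h2 : i + 1 < n),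
        T q i h1 (by omega) * T q (i + 1) (by omega) h2 * T q i h1 (by omega)
          = T q (i + 1) (by omega) h2 * T q i h1 (by omega) * T q (i + 1) (by omega) h2) ∧
    (∀ (i j : ℕ) (hi1 : 1 ≤ i) (hi2 : i < n) (hj1 : 1 ≤ j) (hj2 : j < n),
        i + 2 ≤ j ∨ j + 2 ≤ i →
        T q i hi1 hi2 * T q j hj1 hj2 = T q j hj1 hj2 * T q i hi1 hi2) := by
  constructor
  · intro i h1 h2
    exact braidT q hq ⟨i - 1, by omega⟩ ⟨i, by omega⟩ ⟨i + 1, h2⟩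
      (Fin.ne_of_val_ne (show i - 1 ≠ i by omega)) (Fin.ne_of_val_ne (show i ≠ i + 1 by omega))
      (Fin.ne_of_val_ne (show i - 1 ≠ i + 1 by omega))
  · intro i j hi1 hi2 hj1 hj2 hij
    have h := tlGen_comm (-q) (-q⁻¹) (-q) (-q⁻¹)
      (⟨i - 1, by omega⟩ : Fin n) ⟨i, hi2⟩ ⟨j - 1, by omega⟩ ⟨j, hj2⟩
      (Fin.ne_of_val_ne (show i - 1 ≠ j - 1 by omega)) (Fin.ne_of_val_ne (show i - 1 ≠ j by omega))
      (Fin.ne_of_val_ne (show i ≠ j - 1 by omega)) (Fin.ne_of_val_ne (show i ≠ j by omega))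
    simp only [T, E]
    simp only [add_mul, mul_add, smul_mul_assoc, mul_smul_comm, one_mul, mul_one, h]
    match_scalars <;> ring
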